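/- arXiv:2303.01709 — 2 statements merged into one kernel-verified Lean document; each statement's English description precedes it below -/
import Mathlib

section
/- For all p in [0,1], the binary entropy function H(p) = -p·log₂(p) - (1-p)·log₂(1-p) satisfies 4p(1-p) ≤ H(p) ≤ 2·√(p(1-p)). -/
/-- The binary entropy function `H(p) = -p·log₂ p - (1-p)·log₂(1-p)`
(with the convention `0·log₂ 0 = 0`, automatic since `Real.logb 2 0 = 0`). -/
noncomputable def binEntropy (p : ℝ) : ℝ :=
  -(p * Real.logb 2 p) - (1 - p) * Real.logb 2 (1 - p)

/-!
In nats the two bounds say that `F = h - 4 log 2 · p(1-p)` and `G = 2 log 2 · √(p(1-p)) - h`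
are nonnegative on `[0,1]`, where `h` is the entropy in nats. Both are symmetric about `1/2` and
vanish at `0` and `1/2`, and their second derivatives `F'' = 8 log 2 - 1/(p(1-p))` and
`G'' = (1 - log 2 / (2√(p(1-p)))) / (p(1-p))` have the sign of `p(1-p) - k` for a constant
`k ≤ 1/4`. Hence each is concave on `[0,c]`, convex on `[c,1-c]` and concave on `[1-c,1]`, where
`c(1-c) = k`. On the middle interval convexity and symmetry put the minimum at `1/2`; on the outer
ones concavity bounds the function below by its nonnegative endpoint values.
-/

open Set
open Real (log)

theorem nonneg_of_symm_of_concaveOn_of_convexOn {f : ℝ → ℝ} {c : ℝ} (hc : c ∈ Icc (0 : ℝ) 2⁻¹)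
    (hsymm : ∀ x, f (1 - x) = f x) (hconc : ConcaveOn ℝ (Icc 0 c) f)
    (hconv : ConvexOn ℝ (Icc c (1 - c)) f) (h0 : f 0 = 0) (hhalf : f 2⁻¹ = 0) {x : ℝ}
    (hx : x ∈ Icc (0 : ℝ) 1) : 0 ≤ f x := by
  obtain ⟨hc0, hc2⟩ := hc
  have hmid : ∀ y ∈ Icc c (1 - c), 0 ≤ f y := by
    intro y hy
    have hy' : 1 - y ∈ Icc c (1 - c) := ⟨by linarith [hy.2], by linarith [hy.1]⟩
    have := hconv.2 hy hy' (by norm_num : (0 : ℝ) ≤ 2⁻¹) (by norm_num : (0 : ℝ) ≤ 2⁻¹) (by norm_num)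
    rw [smul_eq_mul, smul_eq_mul, show 2⁻¹ * y + 2⁻¹ * (1 - y) = (2⁻¹ : ℝ) by ring, hhalf,
      smul_eq_mul, smul_eq_mul, hsymm] at this
    linarith
  have hleft : ∀ y ∈ Icc 0 c, 0 ≤ f y := fun y hy => by
    have := hconc.ge_on_segment (left_mem_Icc.2 hc0) (right_mem_Icc.2 hc0)
      ((segment_eq_Icc hc0).symm ▸ hy)
    rw [h0] at this
    exact (le_min le_rfl (hmid c ⟨le_rfl, by linarith⟩)).trans this
  obtain ⟨hx0, hx1⟩ := hx
  rcases le_total x c with hxc | hcx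
  · exact hleft x ⟨hx0, hxc⟩
  rcases le_total x (1 - c) with hxc' | hcx'
  · exact hmid x ⟨hcx, hxc'⟩
  · rw [← hsymm]
    exact hleft (1 - x) ⟨by linarith, by linarith⟩

theorem exists_mul_one_sub_eq {k : ℝ} (hk : k ∈ Icc (0 : ℝ) 4⁻¹) :
    ∃ c ∈ Icc (0 : ℝ) 2⁻¹, c * (1 - c) = k := by
  have hk' : k ∈ Icc (0 * (1 - 0)) (2⁻¹ * (1 - 2⁻¹)) := by
    norm_num
    exact ⟨hk.1, by linarith [hk.2]⟩
  exact intermediate_value_Icc (by norm_num) (f := fun x : ℝ => x * (1 - x)) (by fun_prop) hk'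

theorem nonneg_of_hasDerivAt2_nonneg_iff {f f' f'' : ℝ → ℝ} {k : ℝ} (hk : k ∈ Icc (0 : ℝ) 4⁻¹)
    (hsymm : ∀ x, f (1 - x) = f x) (hcont : ContinuousOn f (Icc 0 1))
    (hf : ∀ x ∈ Ioo (0 : ℝ) 1, HasDerivAt f (f' x) x)
    (hf' : ∀ x ∈ Ioo (0 : ℝ) 1, HasDerivAt f' (f'' x) x)
    (hf'' : ∀ x ∈ Ioo (0 : ℝ) 1, 0 ≤ f'' x ↔ k ≤ x * (1 - x))
    (h0 : f 0 = 0) (hhalf : f 2⁻¹ = 0) {x : ℝ} (hx : x ∈ Icc (0 : ℝ) 1) : 0 ≤ f x := by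
  obtain ⟨c, ⟨hc0, hc2⟩, rfl⟩ := exists_mul_one_sub_eq hk
  have hsub : ∀ {a b : ℝ}, 0 ≤ a → b ≤ 1 → Ioo a b ⊆ Ioo 0 1 := fun ha hb y hy =>
    ⟨ha.trans_lt hy.1, hy.2.trans_le hb⟩
  refine nonneg_of_symm_of_concaveOn_of_convexOn ⟨hc0, hc2⟩ hsymm ?_ ?_ h0 hhalf hx
  · refine concaveOn_of_hasDerivWithinAt2_nonpos (f' := f') (f'' := f'') (convex_Icc 0 c)
      (hcont.mono (Icc_subset_Icc le_rfl (by linarith))) ?_ ?_ ?_ <;> rw [interior_Icc] <;>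
      intro y hy <;> have hy01 := hsub le_rfl (by linarith) hy
    · exact (hf y hy01).hasDerivWithinAt
    · exact (hf' y hy01).hasDerivWithinAt
    · exact (not_le.1 (mt (hf'' y hy01).1 (not_le.2 (by nlinarith [hy.1, hy.2])))).le
  · refine convexOn_of_hasDerivWithinAt2_nonneg (f' := f') (f'' := f'') (convex_Icc c (1 - c))
      (hcont.mono (Icc_subset_Icc hc0 (by linarith))) ?_ ?_ ?_ <;> rw [interior_Icc] <;>
      intro y hy <;> have hy01 := hsub hc0 (by linarith) hy
    · exact (hf y hy01).hasDerivWithinAt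
    · exact (hf' y hy01).hasDerivWithinAt
    · exact (hf'' y hy01).2 (by nlinarith [hy.1, hy.2])

theorem hasDerivAt_mul_one_sub (x : ℝ) : HasDerivAt (fun y : ℝ => y * (1 - y)) (1 - 2 * x) x :=
  ((hasDerivAt_id x).mul ((hasDerivAt_id x).const_sub 1)).congr_deriv (by simp; ring)

theorem hasDerivAt_log_one_sub_sub_log {x : ℝ} (hx0 : 0 < x) (hx1 : x < 1) :
    HasDerivAt (fun y => log (1 - y) - log y) (-(x * (1 - x))⁻¹) x := by
  have h1 : (1 : ℝ) - x ≠ 0 := by linarith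
  refine ((((hasDerivAt_id x).const_sub 1).log h1).sub (Real.hasDerivAt_log hx0.ne')).congr_deriv ?_
  simp only [id]
  field_simp
  ring

theorem hasDerivAt_sqrt_mul_one_sub {x : ℝ} (hx0 : 0 < x) (hx1 : x < 1) :
    HasDerivAt (fun y => √(y * (1 - y))) ((1 - 2 * x) / (2 * √(x * (1 - x)))) x :=
  (hasDerivAt_mul_one_sub x).sqrt (by nlinarith)

theorem hasDerivAt_one_sub_two_mul_div_sqrt_mul_one_sub {x : ℝ} (hx0 : 0 < x) (hx1 : x < 1) :
    HasDerivAt (fun y => (1 - 2 * y) / √(y * (1 - y)))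
      (-(2 * (x * (1 - x)) * √(x * (1 - x)))⁻¹) x := by
  have hu : 0 < x * (1 - x) := by nlinarith
  have hs : 0 < √(x * (1 - x)) := Real.sqrt_pos.2 hu
  refine ((((hasDerivAt_id x).const_mul 2).const_sub 1).div (hasDerivAt_sqrt_mul_one_sub hx0 hx1)
    hs.ne').congr_deriv ?_
  have h1 : (1 : ℝ) - x ≠ 0 := by linarith
  have hss : √(x * (1 - x)) ^ 2 = x * (1 - x) := Real.sq_sqrt hu.le
  simp only [id]
  field_simp
  rw [hss]
  field_simp
  ring

theorem four_mul_log_two_mul_le_binEntropy {p : ℝ} (hp : p ∈ Icc (0 : ℝ) 1) :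
    4 * log 2 * (p * (1 - p)) ≤ Real.binEntropy p := by
  have hlog : 1 / 2 < log 2 := by linarith [Real.log_two_gt_d9]
  have h8 : 0 < 8 * log 2 := by linarith
  have key := nonneg_of_hasDerivAt2_nonneg_iff
    (f := fun x => Real.binEntropy x - 4 * log 2 * (x * (1 - x)))
    (f' := fun x => log (1 - x) - log x - 4 * log 2 * (1 - 2 * x))
    (f'' := fun x => 8 * log 2 - (x * (1 - x))⁻¹) (k := (8 * log 2)⁻¹)
    ⟨by positivity, by rw [inv_le_inv₀ h8 (by norm_num)]; linarith⟩
    (fun x => by simp only [Real.binEntropy_one_sub]; ring_nf)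
    (by fun_prop)
    (fun x hx => (Real.hasDerivAt_binEntropy hx.1.ne' hx.2.ne).sub
      ((hasDerivAt_mul_one_sub x).const_mul _))
    (fun x hx => ((hasDerivAt_log_one_sub_sub_log hx.1 hx.2).sub
      ((((hasDerivAt_id x).const_mul 2).const_sub 1).const_mul _)).congr_deriv (by simp; ring))
    (fun x hx => sub_nonneg.trans (inv_le_comm₀ (by nlinarith [hx.1, hx.2]) h8))
    (by simp) (by simp only [Real.binEntropy_two_inv]; ring) hp
  linarith

theorem binEntropy_le_two_mul_log_two_mul_sqrt {p : ℝ} (hp : p ∈ Icc (0 : ℝ) 1) :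
    Real.binEntropy p ≤ 2 * log 2 * √(p * (1 - p)) := by
  have hlog : 0 < log 2 := Real.log_pos one_lt_two
  have key := nonneg_of_hasDerivAt2_nonneg_iff
    (f := fun x => 2 * log 2 * √(x * (1 - x)) - Real.binEntropy x)
    (f' := fun x => log 2 * ((1 - 2 * x) / √(x * (1 - x))) - (log (1 - x) - log x))
    (f'' := fun x => (x * (1 - x))⁻¹ - log 2 * (2 * (x * (1 - x)) * √(x * (1 - x)))⁻¹)
    (k := (log 2 / 2) ^ 2)
    ⟨by positivity, by nlinarith [Real.log_two_lt_d9]⟩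
    (fun x => by simp only [Real.binEntropy_one_sub]; ring_nf)
    (by fun_prop)
    (fun x hx => ((hasDerivAt_sqrt_mul_one_sub hx.1 hx.2).const_mul _ |>.sub
      (Real.hasDerivAt_binEntropy hx.1.ne' hx.2.ne)).congr_deriv (by field_simp))
    (fun x hx => ((hasDerivAt_one_sub_two_mul_div_sqrt_mul_one_sub hx.1 hx.2).const_mul _ |>.sub
      (hasDerivAt_log_one_sub_sub_log hx.1 hx.2)).congr_deriv (by ring))
    (fun x hx => by
      have hu : 0 < x * (1 - x) := by nlinarith [hx.1, hx.2]
      have hs : 0 < √(x * (1 - x)) := Real.sqrt_pos.2 hu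
      rw [show (x * (1 - x))⁻¹ - log 2 * (2 * (x * (1 - x)) * √(x * (1 - x)))⁻¹ =
          (2 * √(x * (1 - x)) - log 2) / (2 * (x * (1 - x)) * √(x * (1 - x))) by field_simp,
        le_div_iff₀ (by positivity), zero_mul, sub_nonneg, ← Real.le_sqrt (by positivity) hu.le,
        div_le_iff₀' two_pos])
    (by simp) (by
      simp only [Real.binEntropy_two_inv]
      rw [show (2⁻¹ : ℝ) * (1 - 2⁻¹) = 2⁻¹ ^ 2 by norm_num, Real.sqrt_sq (by norm_num)]
      ring) hp
  linarith

theorem binEntropy_eq_binEntropy_div_log_two (p : ℝ) :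
    binEntropy p = Real.binEntropy p / log 2 := by
  simp only [binEntropy, Real.binEntropy, Real.logb, Real.log_inv]
  ring

/-- For all `p ∈ [0,1]`, `4p(1-p) ≤ H(p) ≤ 2√(p(1-p))`. -/
theorem binEntropy_bounds (p : ℝ) (hp : p ∈ Set.Icc (0:ℝ) 1) :
    4 * p * (1 - p) ≤ binEntropy p ∧ binEntropy p ≤ 2 * Real.sqrt (p * (1 - p)) := by
  have hlog : 0 < log 2 := Real.log_pos one_lt_two
  have lower := four_mul_log_two_mul_le_binEntropy hp
  have upper := binEntropy_le_two_mul_log_two_mul_sqrt hp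
  rw [binEntropy_eq_binEntropy_div_log_two, le_div_iff₀ hlog, div_le_iff₀ hlog]
  constructor <;> linarith
end

section
/- Fix c ∈ (0,1), p ∈ (0,(1-c)/2), and let γ_c = 1/(c·log(e/c)). For binary random variables Y₁,...,Y_k with E[Σᵢ Yᵢ] = pk, there exists a set S ⊆ [k] of size ⌈ck⌉ such that Pr[Yⱼ = 0 for all j ∈ S] > e^{-k/γ_c - 1}. -/
/-!
Let `m = ⌈ck⌉` and let `N` count the coordinates where `Y` vanishes, so `E N = (1 - p)k`.
Averaging over the `m`-subsets `S`, `Pr[Y = 0 on S]` has mean `E[C(N, m)] / C(k, m)`.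
Since `x ↦ x(x - 1)⋯(x - m + 1)` lies above its tangent line at `E N` on the integers
(Weierstrass' product inequality), `m! · E[C(N, m)] ≥ ∏ᵢ<ₘ ((1 - p)k - i)`, and each factor is
at least `(k - i)/2` because `i < ck < (1 - 2p)k`. So the average exceeds `2⁻ᵐ`, which is
larger than `e^{-ck log(e/c) - 1}` because `log(e/c) ≥ 1` and `m < ck + 1`.
-/

open Finset

theorem one_add_sum_le_prod_one_add {ι : Type*} (s : Finset ι) (x : ι → ℝ)
    (hx : ∀ i ∈ s, -1 ≤ x i) (hsign : ∀ i ∈ s, ∀ j ∈ s, 0 ≤ x i * x j) :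
    1 + ∑ i ∈ s, x i ≤ ∏ i ∈ s, (1 + x i) := by
  induction s using Finset.cons_induction with
  | empty => simp
  | cons a s _ ih =>
    have hxa : 0 ≤ 1 + x a := by linarith [hx a (mem_cons_self a s)]
    have hcross : 0 ≤ x a * ∑ i ∈ s, x i := by
      rw [mul_sum]
      exact sum_nonneg fun i hi => hsign a (mem_cons_self a s) i (mem_cons_of_mem hi)
    have ih' := ih (fun i hi => hx i (mem_cons_of_mem hi))
      (fun i hi j hj => hsign i (mem_cons_of_mem hi) j (mem_cons_of_mem hj))
    rw [prod_cons, sum_cons]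
    calc 1 + (x a + ∑ i ∈ s, x i) ≤ (1 + x a) * (1 + ∑ i ∈ s, x i) := by nlinarith
      _ ≤ (1 + x a) * ∏ i ∈ s, (1 + x i) := mul_le_mul_of_nonneg_left ih' hxa

/-- The left side is the tangent line of `x ↦ ∏ i < m, (x - i)` at `μ`, evaluated at `n`. -/
theorem tangent_le_descFactorial {m : ℕ} {μ : ℝ} (hμ : (m : ℝ) - 1 < μ) (n : ℕ) :
    (∏ i ∈ range m, (μ - i)) * (1 + (∑ i ∈ range m, (μ - i)⁻¹) * (n - μ)) ≤
      n.descFactorial m := by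
  have hpos : ∀ i ∈ range m, 0 < μ - i := fun i hi => by
    have : (i : ℝ) + 1 ≤ m := by exact_mod_cast mem_range.mp hi
    linarith
  have hprod_pos : 0 < ∏ i ∈ range m, (μ - i) := prod_pos hpos
  rcases lt_or_ge n m with hnm | hmn
  · obtain ⟨l, rfl⟩ : ∃ l, m = l + 1 := Nat.exists_eq_add_one_of_ne_zero (by omega)
    have hlast : (μ - l)⁻¹ ≤ ∑ i ∈ range (l + 1), (μ - i)⁻¹ :=
      single_le_sum (fun i hi => (inv_pos.mpr (hpos i hi)).le) (self_mem_range_succ l)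
    have hnl : (n : ℝ) ≤ l := by exact_mod_cast Nat.lt_succ_iff.mp hnm
    have hμl : 0 < μ - l := hpos l (self_mem_range_succ l)
    have hslope : 1 ≤ (∑ i ∈ range (l + 1), (μ - i)⁻¹) * (μ - n) :=
      calc 1 = (μ - l)⁻¹ * (μ - l) := (inv_mul_cancel₀ hμl.ne').symm
        _ ≤ (μ - l)⁻¹ * (μ - n) := mul_le_mul_of_nonneg_left (by linarith) (inv_pos.mpr hμl).le
        _ ≤ _ := mul_le_mul_of_nonneg_right hlast (by linarith)
    have : 1 + (∑ i ∈ range (l + 1), (μ - i)⁻¹) * (n - μ) ≤ 0 := by linarith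
    rw [Nat.descFactorial_eq_zero_iff_lt.mpr hnm, Nat.cast_zero]
    exact mul_nonpos_of_nonneg_of_nonpos hprod_pos.le this
  · set x : ℕ → ℝ := fun i => (μ - i)⁻¹ * (n - μ)
    have hfactor : ∀ i ∈ range m, (n : ℝ) - i = (μ - i) * (1 + x i) := fun i hi => by
      rw [mul_add, mul_one, ← mul_assoc, mul_inv_cancel₀ (hpos i hi).ne', one_mul]
      ring
    have hx : ∀ i ∈ range m, -1 ≤ x i := fun i hi => by
      have hin : (i : ℝ) ≤ n := by exact_mod_cast (mem_range.mp hi).le.trans hmn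
      have := hfactor i hi
      nlinarith [hpos i hi]
    have hsign : ∀ i ∈ range m, ∀ j ∈ range m, 0 ≤ x i * x j := fun i hi j hj => by
      have : x i * x j = (n - μ) ^ 2 * ((μ - i)⁻¹ * (μ - j)⁻¹) := by ring
      rw [this]
      exact mul_nonneg (sq_nonneg _) (mul_nonneg (inv_pos.mpr (hpos i hi)).le
        (inv_pos.mpr (hpos j hj)).le)
    rw [Nat.descFactorial_eq_prod_range, Nat.cast_prod,
      prod_congr rfl fun i hi => Nat.cast_sub ((mem_range.mp hi).le.trans hmn),
      prod_congr rfl hfactor, prod_mul_distrib, sum_mul]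
    exact mul_le_mul_of_nonneg_left (one_add_sum_le_prod_one_add _ x hx hsign) hprod_pos.le

theorem prod_sub_mean_le_factorial_mul_sum_mul_choose {Ω : Type*} [Fintype Ω] (w : Ω → ℝ)
    (hw0 : ∀ ω, 0 ≤ w ω) (hw1 : ∑ ω, w ω = 1) (N : Ω → ℕ) {m : ℕ}
    (hm : (m : ℝ) - 1 < ∑ ω, w ω * N ω) :
    ∏ i ∈ range m, (∑ ω, w ω * N ω - i) ≤ m.factorial * ∑ ω, w ω * (N ω).choose m := by
  set μ := ∑ ω, w ω * N ω
  set B := ∏ i ∈ range m, (μ - i)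
  set t := ∑ i ∈ range m, (μ - i)⁻¹
  have hmean_tangent : ∑ ω, w ω * (B * (1 + t * (N ω - μ))) = B := by
    have hexpand : ∀ ω, w ω * (B * (1 + t * (N ω - μ))) =
        B * w ω + B * t * (w ω * N ω) - B * t * μ * w ω := fun ω => by ring
    simp only [hexpand, sum_add_distrib, sum_sub_distrib, ← mul_sum, hw1]
    ring
  calc B = ∑ ω, w ω * (B * (1 + t * (N ω - μ))) := hmean_tangent.symm
    _ ≤ ∑ ω, w ω * (N ω).descFactorial m :=
      sum_le_sum fun ω _ => mul_le_mul_of_nonneg_left (tangent_le_descFactorial hm _) (hw0 ω)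
    _ = m.factorial * ∑ ω, w ω * (N ω).choose m := by
      simp only [Nat.descFactorial_eq_factorial_mul_choose, Nat.cast_mul, mul_sum]
      exact sum_congr rfl fun ω _ => by ring

theorem sum_powersetCard_sum_ite_forall {α Ω : Type*} [Fintype α] [Fintype Ω]
    (P : Ω → α → Prop) [∀ ω, DecidablePred (P ω)]
    [∀ ω (S : Finset α), Decidable (∀ j ∈ S, P ω j)]
    (w : Ω → ℝ) (m : ℕ) :
    ∑ S ∈ powersetCard m (univ : Finset α), ∑ ω, (if ∀ j ∈ S, P ω j then w ω else 0) =
      ∑ ω, w ω * (#{j | P ω j}).choose m := by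
  rw [sum_comm]
  refine sum_congr rfl fun ω _ => ?_
  have hfilter :
      {S ∈ powersetCard m (univ : Finset α) | ∀ j ∈ S, P ω j} = powersetCard m {j | P ω j} := by
    ext S
    simp [mem_powersetCard, subset_iff, and_comm]
  rw [← sum_filter, hfilter, sum_const, card_powersetCard, nsmul_eq_mul, mul_comm]

theorem card_filter_eq_zero_eq_card_sub_sum {ι : Type*} [Fintype ι] (y : ι → ℝ)
    (hy : ∀ j, y j = 0 ∨ y j = 1) : (#{j | y j = 0} : ℝ) = Fintype.card ι - ∑ j, y j := by
  have hindicator : ∀ j, (if y j = 0 then (1 : ℝ) else 0) = 1 - y j := fun j => by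
    rcases hy j with h | h <;> simp [h]
  rw [eq_sub_iff_add_eq, ← sum_boole, ← sum_add_distrib]
  simp [hindicator]

theorem sum_mul_card_filter_eq_zero {ι Ω : Type*} [Fintype ι] [Fintype Ω] (w : Ω → ℝ)
    (hw1 : ∑ ω, w ω = 1) (Y : ι → Ω → ℝ) (hY : ∀ j ω, Y j ω = 0 ∨ Y j ω = 1) :
    ∑ ω, w ω * (#{j | Y j ω = 0} : ℕ) = Fintype.card ι - ∑ j, ∑ ω, w ω * Y j ω := by
  simp only [card_filter_eq_zero_eq_card_sub_sum _ (hY · _), mul_sub, sum_sub_distrib, ← sum_mul,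
    hw1, mul_sum]
  rw [sum_comm, one_mul]

theorem half_pow_mul_descFactorial_le_prod {k m : ℕ} {μ : ℝ} (hmk : m ≤ k)
    (hμ : (k : ℝ) + m - 1 ≤ 2 * μ) :
    (1 / 2) ^ m * (k.descFactorial m : ℝ) ≤ ∏ i ∈ range m, (μ - i) := by
  rw [Nat.descFactorial_eq_prod_range, Nat.cast_prod, ← card_range m, ← prod_const,
    card_range, ← prod_mul_distrib]
  refine prod_le_prod (fun i hi => ?_) (fun i hi => ?_) <;>
  · have hi : i < m := mem_range.mp hi
    have : (i : ℝ) + 1 ≤ m := by exact_mod_cast hi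
    rw [Nat.cast_sub (by omega)]
    have : (m : ℝ) ≤ k := by exact_mod_cast hmk
    linarith

theorem exp_neg_div_gamma_sub_one_lt_half_pow_ceil {c : ℝ} (hc0 : 0 < c) (hc1 : c ≤ 1) (k : ℕ) :
    Real.exp (-(k : ℝ) / (1 / (c * Real.log (Real.exp 1 / c))) - 1) < (1 / 2) ^ ⌈c * k⌉₊ := by
  have hlog : 1 ≤ Real.log (Real.exp 1 / c) := by
    rw [Real.log_div (Real.exp_ne_zero 1) hc0.ne', Real.log_exp]
    linarith [Real.log_nonpos hc0.le hc1]
  have hceil : (⌈c * k⌉₊ : ℝ) < c * k + 1 := Nat.ceil_lt_add_one (by positivity)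
  have hlog2 : Real.log 2 ≤ 1 := by
    linarith [Real.log_le_sub_one_of_pos (by norm_num : (0 : ℝ) < 2)]
  rw [div_div_eq_mul_div, div_one, ← Real.exp_log (by norm_num : (0 : ℝ) < 1 / 2),
    ← Real.exp_nat_mul, Real.exp_lt_exp, one_div, Real.log_inv]
  nlinarith [mul_nonneg (mul_nonneg hc0.le (Nat.cast_nonneg k)) (sub_nonneg.mpr hlog),
    mul_le_mul_of_nonneg_left hlog2 (Nat.cast_nonneg (⌈c * k⌉₊ : ℕ))]

theorem exists_large_unobserved_set_general {Ω : Type*} [Fintype Ω] (k : ℕ)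
    (c p : ℝ) (hc : c ∈ Set.Ioo (0:ℝ) 1) (hp : p ∈ Set.Ioo (0:ℝ) ((1 - c) / 2))
    (w : Ω → ℝ) (hw0 : ∀ ω, 0 ≤ w ω) (hw1 : ∑ ω, w ω = 1)
    (Y : Fin k → Ω → ℝ) (hY : ∀ j ω, Y j ω = 0 ∨ Y j ω = 1)
    (hmean : ∑ j : Fin k, ∑ ω, w ω * Y j ω = p * k) :
    ∃ S : Finset (Fin k), S.card = ⌈c * k⌉₊ ∧
      (∑ ω, if ∀ j ∈ S, Y j ω = 0 then w ω else 0) >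
        Real.exp (-(k : ℝ) / (1 / (c * Real.log (Real.exp 1 / c))) - 1) := by
  obtain ⟨hc0, hc1⟩ := hc
  set m := ⌈c * k⌉₊
  set τ := Real.exp (-(k : ℝ) / (1 / (c * Real.log (Real.exp 1 / c))) - 1)
  have hk0 : (0 : ℝ) ≤ k := Nat.cast_nonneg k
  have hmk : m ≤ k := Nat.ceil_le.mpr (by nlinarith)
  have hμ : (k : ℝ) + m - 1 ≤ 2 * ((1 - p) * k) := by
    nlinarith [Nat.ceil_lt_add_one (by positivity : 0 ≤ c * k), hp.2]
  have hzeros : ∑ ω, w ω * (#{j | Y j ω = 0} : ℕ) = (1 - p) * k := by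
    rw [sum_mul_card_filter_eq_zero w hw1 Y hY, hmean, Fintype.card_fin]
    ring
  have hlower : ∏ i ∈ range m, ((1 - p) * k - i) ≤ m.factorial *
      ∑ S ∈ powersetCard m univ, ∑ ω, (if ∀ j ∈ S, Y j ω = 0 then w ω else 0) := by
    rw [sum_powersetCard_sum_ite_forall (fun ω j => Y j ω = 0), ← hzeros]
    refine prod_sub_mean_le_factorial_mul_sum_mul_choose w hw0 hw1 _ ?_
    rw [hzeros]
    linarith [(Nat.cast_le.mpr hmk : (m : ℝ) ≤ k)]
  have hupper : m.factorial * ∑ _S ∈ powersetCard m (univ : Finset (Fin k)), τ <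
      ∏ i ∈ range m, ((1 - p) * k - i) :=
    calc _ = τ * k.descFactorial m := by
          rw [sum_const, card_powersetCard, card_univ, Fintype.card_fin, nsmul_eq_mul,
            Nat.descFactorial_eq_factorial_mul_choose]
          push_cast
          ring
      _ < (1 / 2) ^ m * k.descFactorial m :=
          mul_lt_mul_of_pos_right (exp_neg_div_gamma_sub_one_lt_half_pow_ceil hc0 hc1.le k)
            (Nat.cast_pos.mpr (Nat.descFactorial_pos.mpr hmk))
      _ ≤ _ := half_pow_mul_descFactorial_le_prod hmk hμ
  obtain ⟨S, hS, hlt⟩ :=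
    exists_lt_of_sum_lt (lt_of_mul_lt_mul_left (hupper.trans_le hlower) (by positivity))
  exact ⟨S, mem_powersetCard_univ.mp hS, hlt⟩

/-- Lemma 3.6 of Kamath et al. (2021): fix `c ∈ (0,1)`, `p ∈ (0, (1-c)/2)`, and let
`γ_c = 1/(c·log(e/c))` (natural log). For binary random variables `Y₁,…,Y_k` on a
finite probability space with `E[Σᵢ Yᵢ] = pk`, there exists a set `S ⊆ [k]` of size
`⌈ck⌉` such that `Pr[Yⱼ = 0 for all j ∈ S] > e^{-k/γ_c - 1}`. -/
theorem exists_large_unobserved_set {Ω : Type*} [Fintype Ω] (k : ℕ) (hk : 1 ≤ k)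
    (c p : ℝ) (hc : c ∈ Set.Ioo (0:ℝ) 1) (hp : p ∈ Set.Ioo (0:ℝ) ((1 - c) / 2))
    (w : Ω → ℝ) (hw0 : ∀ ω, 0 ≤ w ω) (hw1 : ∑ ω, w ω = 1)
    (Y : Fin k → Ω → ℝ) (hY : ∀ j ω, Y j ω = 0 ∨ Y j ω = 1)
    (hmean : ∑ j : Fin k, ∑ ω, w ω * Y j ω = p * k) :
    ∃ S : Finset (Fin k), S.card = ⌈c * k⌉₊ ∧
      (∑ ω, if ∀ j ∈ S, Y j ω = 0 then w ω else 0) >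
        Real.exp (-(k : ℝ) / (1 / (c * Real.log (Real.exp 1 / c))) - 1) :=
  exists_large_unobserved_set_general k c p hc hp w hw0 hw1 Y hY hmean
end
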